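/- arXiv:1804.02521 — 2 statements merged into one kernel-verified Lean document; each statement's English description precedes it below -/
import Mathlib

section
/- Let a, b, c be real numbers with a ≥ 1, b ≥ 1, c ≥ 1 satisfying a² = 1 + a + b + c, b² = 1 + a + b, and c² = 1 + b. Then there is no way to split the four real numbers 1, a², b², c² into two complementary groups with equal sums; equivalently, for all choices of signs ε₀, ε₁, ε₂, ε₃ ∈ {1, −1}, one has ε₀·1 + ε₁·a² + ε₂·b² + ε₃·c² ≠ 0. -/
theorem qdim_no_equal_splitting (a b c : ℝ) (ha : 1 ≤ a) (hb : 1 ≤ b) (hc : 1 ≤ c)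
    (h1 : a ^ 2 = 1 + a + b + c) (h2 : b ^ 2 = 1 + a + b) (h3 : c ^ 2 = 1 + b) :
    ∀ ε₀ ε₁ ε₂ ε₃ : ℝ, (ε₀ = 1 ∨ ε₀ = -1) → (ε₁ = 1 ∨ ε₁ = -1) →
      (ε₂ = 1 ∨ ε₂ = -1) → (ε₃ = 1 ∨ ε₃ = -1) →
      ε₀ * 1 + ε₁ * a ^ 2 + ε₂ * b ^ 2 + ε₃ * c ^ 2 ≠ 0 := by
  have hbc : c < b := by nlinarith [sq_nonneg (b - c), sq_nonneg (b + c)]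
  intro ε₀ ε₁ ε₂ ε₃ h₀ h₁ h₂' h₃'
  rcases h₀ with rfl | rfl <;> rcases h₁ with rfl | rfl <;>
    rcases h₂' with rfl | rfl <;> rcases h₃' with rfl | rfl <;>
    intro h <;> linarith
end

section
/- Consider the multiset of ten real numbers consisting of 1, six copies of (5+2√5)² = 45+20√5, two copies of (8+4√5)² = 144+64√5, and one copy of (9+4√5)² = 161+72√5. Then the total sum of this multiset equals 720+320√5, and no sub-multiset of it has sum equal to 360+160√5. -/
/-- The multiset of the squares of the quantum dimensions of the ten inequivalent
irreducible modules of the simple current extension `L̃_{A₄}(5,0)`: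
`1`, six copies of `(5+2√5)²`, two copies of `(8+4√5)²`, and one copy of `(9+4√5)²`. -/
noncomputable def qdimSquares : Multiset ℝ :=
  1 ::ₘ (Multiset.replicate 6 ((5 + 2 * Real.sqrt 5) ^ 2) +
    Multiset.replicate 2 ((8 + 4 * Real.sqrt 5) ^ 2) +
    {(9 + 4 * Real.sqrt 5) ^ 2})

lemma coeff_eq_of_sqrt5 (A B : ℕ) (h : (A : ℝ) + B * Real.sqrt 5 = 360 + 160 * Real.sqrt 5) :
    A = 360 ∧ B = 160 := by
  have hx : Irrational (Real.sqrt 5) := (by norm_num : Nat.Prime 5).irrational_sqrt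
  have hB : (B : ℝ) = 160 := by
    by_contra hne
    have hne' : (B : ℝ) - 160 ≠ 0 := sub_ne_zero.mpr hne
    have hxq : Real.sqrt 5 = ((360 : ℝ) - A) / ((B : ℝ) - 160) := by
      field_simp
      linarith
    have : Real.sqrt 5 = (((360 - (A : ℚ)) / ((B : ℚ) - 160) : ℚ) : ℝ) := by
      push_cast
      exact hxq
    exact hx ⟨_, this.symm⟩
  have hA : (A : ℝ) = 360 := by rw [hB] at h; linarith
  exact ⟨by exact_mod_cast hA, by exact_mod_cast hB⟩

lemma multiset_decomp {o p q r : ℝ} (h1p : o ≠ p) (h1q : o ≠ q) (h1r : o ≠ r)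
    (hpq : p ≠ q) (hpr : p ≠ r) (hqr : q ≠ r) (S : Multiset ℝ)
    (hS : S ≤ o ::ₘ (Multiset.replicate 6 p + Multiset.replicate 2 q + {r})) :
    ∃ a b c d : ℕ, a ≤ 1 ∧ b ≤ 6 ∧ c ≤ 2 ∧ d ≤ 1 ∧
      S.sum = a • o + b • p + c • q + d • r := by
  classical
  have hcount := Multiset.le_iff_count.mp hS
  have nes : p ≠ o ∧ q ≠ o ∧ r ≠ o ∧ q ≠ p ∧ r ≠ p ∧ r ≠ q :=
    ⟨Ne.symm h1p, Ne.symm h1q, Ne.symm h1r, Ne.symm hpq, Ne.symm hpr, Ne.symm hqr⟩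
  obtain ⟨hp1, hq1, hr1, hqp, hrp, hrq⟩ := nes
  refine ⟨S.count o, S.count p, S.count q, S.count r, ?_, ?_, ?_, ?_, ?_⟩
  · have := hcount o
    simpa [Multiset.count_cons, Multiset.count_replicate, Multiset.count_singleton,
      h1p, h1q, h1r, hp1, hq1, hr1] using this
  · have := hcount p
    simpa [Multiset.count_cons, Multiset.count_replicate, Multiset.count_singleton,
      hp1, hpq, hpr, h1p, hqp, hrp] using this
  · have := hcount q
    simpa [Multiset.count_cons, Multiset.count_replicate, Multiset.count_singleton,
      hq1, hqp, hqr, h1q, hpq, hrq] using this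
  · have := hcount r
    simpa [Multiset.count_cons, Multiset.count_replicate, Multiset.count_singleton,
      hr1, hrp, hrq, h1r, hpr, hqr] using this
  · have hSeq : S = Multiset.replicate (S.count o) o + Multiset.replicate (S.count p) p +
        Multiset.replicate (S.count q) q + Multiset.replicate (S.count r) r := by
      ext y
      simp only [Multiset.count_add, Multiset.count_replicate]
      by_cases h1 : y = o
      · subst h1; simp [Ne.symm h1p, Ne.symm h1q, Ne.symm h1r]
      · by_cases h2 : y = p
        · subst h2; simp [h1p, Ne.symm hpq, Ne.symm hpr]
        · by_cases h3 : y = q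
          · subst h3; simp [h1q, hpq, Ne.symm hqr]
          · by_cases h4 : y = r
            · subst h4; simp [h1r, hpr, hqr]
            · have := hcount y
              simp [Multiset.count_cons, Multiset.count_replicate, Multiset.count_singleton,
                h1, h2, h3, h4, Ne.symm h1, Ne.symm h2, Ne.symm h3, Ne.symm h4] at this
              simp [this, h1, h2, h3, h4, Ne.symm h1, Ne.symm h2, Ne.symm h3, Ne.symm h4]
    conv_lhs => rw [hSeq]
    simp [Multiset.sum_replicate]

theorem qdimSquares_sum_and_no_half_splitting :
    ((5 + 2 * Real.sqrt 5) ^ 2 = 45 + 20 * Real.sqrt 5 ∧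
      (8 + 4 * Real.sqrt 5) ^ 2 = 144 + 64 * Real.sqrt 5 ∧
      (9 + 4 * Real.sqrt 5) ^ 2 = 161 + 72 * Real.sqrt 5) ∧
    qdimSquares.sum = 720 + 320 * Real.sqrt 5 ∧
    ∀ S : Multiset ℝ, S ≤ qdimSquares → S.sum ≠ 360 + 160 * Real.sqrt 5 := by
  have hx2 : Real.sqrt 5 ^ 2 = 5 := Real.sq_sqrt (by norm_num)
  have hxgt : 2 < Real.sqrt 5 := by nlinarith [Real.sqrt_nonneg 5]
  have hp : (5 + 2 * Real.sqrt 5) ^ 2 = 45 + 20 * Real.sqrt 5 := by nlinarith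
  have hq : (8 + 4 * Real.sqrt 5) ^ 2 = 144 + 64 * Real.sqrt 5 := by nlinarith
  have hr : (9 + 4 * Real.sqrt 5) ^ 2 = 161 + 72 * Real.sqrt 5 := by nlinarith
  refine ⟨⟨hp, hq, hr⟩, ?_, ?_⟩
  · simp only [qdimSquares, Multiset.sum_cons, Multiset.sum_add, Multiset.sum_singleton,
      Multiset.sum_replicate, nsmul_eq_mul]
    rw [hp, hq, hr]; push_cast; ring
  · intro S hS hsum
    have h1p : (1 : ℝ) ≠ (5 + 2 * Real.sqrt 5) ^ 2 := by rw [hp]; nlinarith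
    have h1q : (1 : ℝ) ≠ (8 + 4 * Real.sqrt 5) ^ 2 := by rw [hq]; nlinarith
    have h1r : (1 : ℝ) ≠ (9 + 4 * Real.sqrt 5) ^ 2 := by rw [hr]; nlinarith
    have hpq : (5 + 2 * Real.sqrt 5) ^ 2 ≠ (8 + 4 * Real.sqrt 5) ^ 2 := by
      rw [hp, hq]; nlinarith
    have hpr : (5 + 2 * Real.sqrt 5) ^ 2 ≠ (9 + 4 * Real.sqrt 5) ^ 2 := by
      rw [hp, hr]; nlinarith
    have hqr : (8 + 4 * Real.sqrt 5) ^ 2 ≠ (9 + 4 * Real.sqrt 5) ^ 2 := by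
      rw [hq, hr]; nlinarith
    obtain ⟨a, b, c, d, ha, hb, hc, hd, hsum'⟩ :=
      multiset_decomp h1p h1q h1r hpq hpr hqr S hS
    rw [hsum, hp, hq, hr] at hsum'
    simp only [nsmul_eq_mul, smul_eq_mul, mul_one] at hsum'
    have hkey : ((a + 45 * b + 144 * c + 161 * d : ℕ) : ℝ) +
        ((20 * b + 64 * c + 72 * d : ℕ) : ℝ) * Real.sqrt 5 = 360 + 160 * Real.sqrt 5 := by
      push_cast
      nlinarith [hsum']
    obtain ⟨hA, hB⟩ := coeff_eq_of_sqrt5 _ _ hkey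
    interval_cases c <;> interval_cases d <;> omega
end
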